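/- arXiv:math/0211361 — 3 statements merged into one kernel-verified Lean document; each statement's English description precedes it below -/
import Mathlib

section
/- For every m ≥ 0 and 1-forms ξ, η on an n-dimensional inner product space, the trace of ι(η)ε(ξ) acting on Λᵐ V* equals A_{n,m}⟨ξ,η⟩, where A_{n,m} = C(n,m) − C(n,m−1) + ⋯ + (−1)ᵐ C(n,0) is the alternating sum of binomial coefficients. -/
noncomputable section

open ExteriorAlgebra
open scoped RealInnerProductSpace

abbrev Vn (n : ℕ) := EuclideanSpace ℝ (Fin n)

variable {n : ℕ}

def eps (ξ : Vn n) : ExteriorAlgebra ℝ (Vn n) →ₗ[ℝ] ExteriorAlgebra ℝ (Vn n) :=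
  LinearMap.mulLeft ℝ (ExteriorAlgebra.ι ℝ ξ)

def iot (ξ : Vn n) : ExteriorAlgebra ℝ (Vn n) →ₗ[ℝ] ExteriorAlgebra ℝ (Vn n) :=
  CliffordAlgebra.contractLeft (Q := (0 : QuadraticForm ℝ (Vn n)))
    (innerSL ℝ ξ).toLinearMap

lemma eps_mem (ξ : Vn n) (m : ℕ) :
    ∀ x ∈ ⋀[ℝ]^m (Vn n), eps ξ x ∈ ⋀[ℝ]^(m+1) (Vn n) := by
  intro x hx
  rw [exteriorPower, pow_succ']
  exact Submodule.mul_mem_mul ⟨ξ, rfl⟩ hx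

lemma iot_zero_mem (ξ : Vn n) :
    ∀ x ∈ ⋀[ℝ]^0 (Vn n), iot ξ x = 0 := by
  intro x hx
  rw [exteriorPower, pow_zero, Submodule.one_eq_range] at hx
  obtain ⟨r, rfl⟩ := hx
  exact CliffordAlgebra.contractLeft_algebraMap
    (Q := (0 : QuadraticForm ℝ (Vn n))) (innerSL ℝ ξ).toLinearMap r

lemma iot_mem (ξ : Vn n) (m : ℕ) :
    ∀ x ∈ ⋀[ℝ]^(m+1) (Vn n), iot ξ x ∈ ⋀[ℝ]^m (Vn n) := by
  induction m with
  | zero =>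
    intro x hx
    rw [exteriorPower, pow_one] at hx
    obtain ⟨v, rfl⟩ := hx
    rw [iot, CliffordAlgebra.contractLeft_ι]
    exact Submodule.algebraMap_mem _
  | succ k ih =>
    intro x hx
    rw [exteriorPower, pow_succ'] at hx
    refine Submodule.mul_induction_on hx ?_ ?_
    · rintro a ⟨v, rfl⟩ b hb
      rw [iot, CliffordAlgebra.contractLeft_ι_mul]
      refine sub_mem (Submodule.smul_mem _ _ hb) ?_
      rw [exteriorPower, pow_succ']
      exact Submodule.mul_mem_mul ⟨v, rfl⟩ (ih b hb)
    · intro x y hx hy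
      rw [map_add]
      exact add_mem hx hy

/-- `S(ξ) = ε(ξ)ι(ξ) − ι(ξ)ε(ξ)`. -/
def SOp (ξ : Vn n) : ExteriorAlgebra ℝ (Vn n) →ₗ[ℝ] ExteriorAlgebra ℝ (Vn n) :=
  eps ξ ∘ₗ iot ξ - iot ξ ∘ₗ eps ξ

lemma SOp_mem (ξ : Vn n) (m : ℕ) :
    ∀ x ∈ ⋀[ℝ]^m (Vn n), SOp ξ x ∈ ⋀[ℝ]^m (Vn n) := by
  intro x hx
  have h2 : iot ξ (eps ξ x) ∈ ⋀[ℝ]^m (Vn n) := iot_mem ξ m _ (eps_mem ξ m x hx)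
  have h1 : eps ξ (iot ξ x) ∈ ⋀[ℝ]^m (Vn n) := by
    match m with
    | 0 => rw [iot_zero_mem ξ x hx, map_zero]; exact Submodule.zero_mem _
    | k+1 => exact eps_mem ξ k _ (iot_mem ξ k x hx)
  simpa [SOp, LinearMap.sub_apply, LinearMap.comp_apply] using sub_mem h1 h2

/-- `S(ξ)` restricted to `m`-forms. -/
def SRes (ξ : Vn n) (m : ℕ) : ⋀[ℝ]^m (Vn n) →ₗ[ℝ] ⋀[ℝ]^m (Vn n) :=
  (SOp ξ).restrict (SOp_mem ξ m)

/-- The leading symbol `σ(ξ) = |ξ|⁻²(ε(ξ)ι(ξ) − ι(ξ)ε(ξ))`. -/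
def sigmaOp (ξ : Vn n) : ExteriorAlgebra ℝ (Vn n) →ₗ[ℝ] ExteriorAlgebra ℝ (Vn n) :=
  (‖ξ‖ ^ 2)⁻¹ • SOp ξ

lemma sigmaOp_mem (ξ : Vn n) (m : ℕ) :
    ∀ x ∈ ⋀[ℝ]^m (Vn n), sigmaOp ξ x ∈ ⋀[ℝ]^m (Vn n) := by
  intro x hx
  simpa [sigmaOp] using Submodule.smul_mem _ _ (SOp_mem ξ m x hx)

/-- `σ(ξ)` restricted to `m`-forms. -/
def sigmaR (ξ : Vn n) (m : ℕ) : ⋀[ℝ]^m (Vn n) →ₗ[ℝ] ⋀[ℝ]^m (Vn n) :=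
  (sigmaOp ξ).restrict (sigmaOp_mem ξ m)

/-- `ε(ξ₁)ι(ξ₂)ε(η₁)ι(η₂)`. -/
def quad (ξ₁ ξ₂ η₁ η₂ : Vn n) : ExteriorAlgebra ℝ (Vn n) →ₗ[ℝ] ExteriorAlgebra ℝ (Vn n) :=
  eps ξ₁ ∘ₗ iot ξ₂ ∘ₗ eps η₁ ∘ₗ iot η₂

lemma quad_mem (ξ₁ ξ₂ η₁ η₂ : Vn n) (m : ℕ) :
    ∀ x ∈ ⋀[ℝ]^m (Vn n), quad ξ₁ ξ₂ η₁ η₂ x ∈ ⋀[ℝ]^m (Vn n) := by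
  intro x hx
  have hq : quad ξ₁ ξ₂ η₁ η₂ x = eps ξ₁ (iot ξ₂ (eps η₁ (iot η₂ x))) := rfl
  match m with
  | 0 =>
    rw [hq, iot_zero_mem η₂ x hx]
    simp only [map_zero]
    exact Submodule.zero_mem _
  | k+1 =>
    rw [hq]
    exact eps_mem _ k _ (iot_mem _ k _ (eps_mem _ k _ (iot_mem _ k x hx)))

/-- `ε(ξ₁)ι(ξ₂)ε(η₁)ι(η₂)` restricted to `m`-forms. -/
def quadR (ξ₁ ξ₂ η₁ η₂ : Vn n) (m : ℕ) : ⋀[ℝ]^m (Vn n) →ₗ[ℝ] ⋀[ℝ]^m (Vn n) :=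
  (quad ξ₁ ξ₂ η₁ η₂).restrict (quad_mem ξ₁ ξ₂ η₁ η₂ m)


/-- `ε(ξ)` as a map from `m`-forms to `(m+1)`-forms. -/
noncomputable def epsR {n : ℕ} (ξ : Vn n) (m : ℕ) : ⋀[ℝ]^m (Vn n) →ₗ[ℝ] ⋀[ℝ]^(m+1) (Vn n) :=
  (eps ξ).restrict (eps_mem ξ m)

/-- `ι(ξ)` as a map from `(m+1)`-forms to `m`-forms. -/
noncomputable def iotR {n : ℕ} (ξ : Vn n) (m : ℕ) : ⋀[ℝ]^(m+1) (Vn n) →ₗ[ℝ] ⋀[ℝ]^m (Vn n) :=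
  (iot ξ).restrict (iot_mem ξ m)

lemma alternating_sum_range_succ {R : Type*} [CommRing R] (d : ℕ → R) (k : ℕ) :
    ∑ j ∈ Finset.range (k + 2), (-1 : R) ^ j * d (k + 1 - j)
      = d (k + 1) - ∑ j ∈ Finset.range (k + 1), (-1 : R) ^ j * d (k - j) := by
  rw [Finset.sum_range_succ', sub_eq_neg_add, ← Finset.sum_neg_distrib]
  simp [pow_succ]

/-- Cyclicity of the trace, `trace (f k ∘ g k) = trace (g k ∘ f k)`, makes each degree contribute
its rank with alternating sign. -/
theorem trace_comp_eq_alternating_sum {R : Type*} [CommRing R] {E : ℕ → Type*}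
    [∀ m, AddCommGroup (E m)] [∀ m, Module R (E m)] [∀ m, Module.Free R (E m)]
    [∀ m, Module.Finite R (E m)] (f : ∀ m, E m →ₗ[R] E (m + 1)) (g : ∀ m, E (m + 1) →ₗ[R] E m)
    (c : R) (h_zero : g 0 ∘ₗ f 0 = c • LinearMap.id)
    (h_succ : ∀ k, g (k + 1) ∘ₗ f (k + 1) = c • LinearMap.id - f k ∘ₗ g k) (m : ℕ) :
    LinearMap.trace R (E m) (g m ∘ₗ f m) =
      (∑ j ∈ Finset.range (m + 1), (-1 : R) ^ j * Module.finrank R (E (m - j))) * c := by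
  induction m with
  | zero => simp [h_zero, mul_comm]
  | succ k ih =>
    rw [h_succ, map_sub, map_smul, LinearMap.trace_id, LinearMap.trace_comp_comm', ih,
      alternating_sum_range_succ (fun i => (Module.finrank R (E i) : R)), smul_eq_mul]
    ring

lemma iot_eps (ξ η : Vn n) (x : ExteriorAlgebra ℝ (Vn n)) :
    iot η (eps ξ x) = ⟪ξ, η⟫ • x - eps ξ (iot η x) := by
  rw [eps, LinearMap.mulLeft_apply, iot, CliffordAlgebra.contractLeft_ι_mul, real_inner_comm]
  rfl

lemma iotR_comp_epsR_zero (ξ η : Vn n) :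
    iotR η 0 ∘ₗ epsR ξ 0 = ⟪ξ, η⟫ • LinearMap.id := by
  refine LinearMap.ext fun x => Subtype.ext ?_
  simp [iotR, epsR, iot_eps, iot_zero_mem η x x.2]

lemma iotR_comp_epsR_succ (ξ η : Vn n) (k : ℕ) :
    iotR η (k + 1) ∘ₗ epsR ξ (k + 1) = ⟪ξ, η⟫ • LinearMap.id - epsR ξ k ∘ₗ iotR η k := by
  refine LinearMap.ext fun x => Subtype.ext ?_
  simp [iotR, epsR, iot_eps]

/-- the trace of `ι(η)ε(ξ)` on `Λᵐ` is `A_{n,m}⟨ξ,η⟩` where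
`A_{n,m} = C(n,m) − C(n,m−1) + ⋯ + (−1)ᵐ C(n,0)`. -/
theorem statement2 {n : ℕ} (m : ℕ) (ξ η : Vn n) :
    LinearMap.trace ℝ (⋀[ℝ]^m (Vn n)) ((iotR η m) ∘ₗ (epsR ξ m))
      = (∑ j ∈ Finset.range (m + 1), (-1 : ℝ) ^ j * (n.choose (m - j))) * ⟪ξ, η⟫ := by
  rw [trace_comp_eq_alternating_sum (E := fun m => ⋀[ℝ]^m (Vn n)) (epsR ξ) (iotR η) _
    (iotR_comp_epsR_zero ξ η) (iotR_comp_epsR_succ ξ η)]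
  simp only [exteriorPower.finrank_eq, finrank_euclideanSpace_fin]
end
end

section
/- The trace of σ(ξ) = |ξ|^{−2}(ε(ξ)ι(ξ) − ι(ξ)ε(ξ)) acting on Λᵐ V* equals 2·A_{n,m−1} − C(n,m), where A_{n,m−1} = Σ_{j=0}^{m−1}(−1)^j C(n, m−1−j), independently of the nonzero covector ξ. -/
/-!
Write `T_m` for `ε(ξ)ι(ξ)` on `Λᵐ`. The anticommutation relation `ι(ξ)ε(ξ) + ε(ξ)ι(ξ) = |ξ|²`
gives `tr T_m + tr (ι(ξ)ε(ξ) on Λᵐ) = |ξ|² C(n,m)`, and cyclicity of the trace identifies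
`tr (ι(ξ)ε(ξ) on Λᵐ)` with `tr (ε(ξ)ι(ξ) on Λᵐ⁺¹) = tr T_{m+1}`. Since `T_0 = 0`, this recursion
solves to `tr T_m = |ξ|² A_{n,m−1}`, and `tr σ(ξ) = |ξ|⁻² (tr T_m − tr T_{m+1}) = 2 A_{n,m−1} − C(n,m)`.
-/

noncomputable section

open ExteriorAlgebra
open scoped RealInnerProductSpace

variable {n : ℕ}

theorem eq_sum_range_neg_one_pow_of_add_succ {R : Type*} [CommRing R] {t b : ℕ → R}
    (h_zero : t 0 = 0) (h_succ : ∀ m, t m + t (m + 1) = b m) (m : ℕ) :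
    t m = ∑ j ∈ Finset.range m, (-1) ^ j * b (m - 1 - j) := by
  induction m with
  | zero => simp [h_zero]
  | succ m ih =>
    rw [eq_sub_of_add_eq' (h_succ m), ih, Finset.sum_range_succ', sub_eq_neg_add,
      ← Finset.sum_neg_distrib]
    congr 1
    · refine Finset.sum_congr rfl fun j _ => ?_
      rw [show m + 1 - 1 - (j + 1) = m - 1 - j by omega, pow_succ]
      ring
    · simp

namespace ExteriorAlgebra

variable {R M : Type*} [CommRing R] [AddCommGroup M] [Module R M]

theorem ι_mul_mem_exteriorPower (v : M) {m : ℕ} {x : ExteriorAlgebra R M}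
    (hx : x ∈ ⋀[R]^m M) : ι R v * x ∈ ⋀[R]^(m + 1) M := by
  rw [exteriorPower, pow_succ']
  exact Submodule.mul_mem_mul ⟨v, rfl⟩ hx

theorem contractLeft_eq_zero_of_mem_exteriorPower_zero (d : Module.Dual R M)
    {x : ExteriorAlgebra R M} (hx : x ∈ ⋀[R]^0 M) :
    CliffordAlgebra.contractLeft d x = 0 := by
  rw [exteriorPower, pow_zero, Submodule.one_eq_range] at hx
  obtain ⟨r, rfl⟩ := hx
  exact CliffordAlgebra.contractLeft_algebraMap _ d r

theorem contractLeft_mem_exteriorPower (d : Module.Dual R M) {m : ℕ} {x : ExteriorAlgebra R M}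
    (hx : x ∈ ⋀[R]^(m + 1) M) : CliffordAlgebra.contractLeft d x ∈ ⋀[R]^m M := by
  induction m generalizing x with
  | zero =>
    rw [exteriorPower, pow_one] at hx
    obtain ⟨v, rfl⟩ := hx
    rw [CliffordAlgebra.contractLeft_ι]
    exact Submodule.algebraMap_mem _
  | succ m ih =>
    rw [exteriorPower, pow_succ'] at hx
    induction hx using Submodule.mul_induction_on' with
    | mem_mul_mem a ha y hy =>
      obtain ⟨v, rfl⟩ := ha
      rw [CliffordAlgebra.contractLeft_ι_mul]
      exact sub_mem (Submodule.smul_mem _ _ hy) (ι_mul_mem_exteriorPower v (ih hy))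
    | add y z _ _ hy hz => rw [map_add]; exact add_mem hy hz

variable (d : Module.Dual R M) (v : M)

def wedgePow (m : ℕ) : ⋀[R]^m M →ₗ[R] ⋀[R]^(m + 1) M :=
  (LinearMap.mulLeft R (ι R v)).restrict fun _ => ι_mul_mem_exteriorPower v

def contractPow (m : ℕ) : ⋀[R]^(m + 1) M →ₗ[R] ⋀[R]^m M :=
  (CliffordAlgebra.contractLeft d).restrict fun _ => contractLeft_mem_exteriorPower d

def wedgeContract : Module.End R (ExteriorAlgebra R M) :=
  LinearMap.mulLeft R (ι R v) ∘ₗ CliffordAlgebra.contractLeft d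

theorem wedgeContract_mem_exteriorPower {m : ℕ} {x : ExteriorAlgebra R M} (hx : x ∈ ⋀[R]^m M) :
    wedgeContract d v x ∈ ⋀[R]^m M := by
  cases m with
  | zero =>
    simp [wedgeContract, contractLeft_eq_zero_of_mem_exteriorPower_zero d hx]
  | succ m => exact ι_mul_mem_exteriorPower v (contractLeft_mem_exteriorPower d hx)

def wedgeContractPow (m : ℕ) : Module.End R (⋀[R]^m M) :=
  (wedgeContract d v).restrict fun _ => wedgeContract_mem_exteriorPower d v

theorem wedgeContractPow_zero : wedgeContractPow d v 0 = 0 := by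
  refine LinearMap.ext fun x => Subtype.ext ?_
  simp [wedgeContractPow, wedgeContract, contractLeft_eq_zero_of_mem_exteriorPower_zero d x.2]

theorem wedgeContractPow_succ (m : ℕ) :
    wedgeContractPow d v (m + 1) = wedgePow v m ∘ₗ contractPow d m :=
  rfl

theorem wedgeContractPow_add_contractPow_comp_wedgePow (m : ℕ) :
    wedgeContractPow d v m + contractPow d m ∘ₗ wedgePow v m = d v • LinearMap.id := by
  refine LinearMap.ext fun x => Subtype.ext ?_
  simp only [LinearMap.add_apply, LinearMap.comp_apply, LinearMap.smul_apply, LinearMap.id_apply,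
    Submodule.coe_add, Submodule.coe_smul]
  exact add_eq_of_eq_sub' (CliffordAlgebra.contractLeft_ι_mul d v (x : ExteriorAlgebra R M))

variable [Nontrivial R] [Module.Free R M] [Module.Finite R M]

theorem trace_wedgeContractPow_add_succ (m : ℕ) :
    LinearMap.trace R _ (wedgeContractPow d v m) + LinearMap.trace R _ (wedgeContractPow d v (m + 1))
      = d v * (Module.finrank R M).choose m := by
  rw [wedgeContractPow_succ, LinearMap.trace_comp_comm', ← map_add,
    wedgeContractPow_add_contractPow_comp_wedgePow, map_smul, LinearMap.trace_id,
    exteriorPower.finrank_eq, smul_eq_mul]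

theorem trace_wedgeContractPow (m : ℕ) :
    LinearMap.trace R _ (wedgeContractPow d v m)
      = d v * ∑ j ∈ Finset.range m, (-1) ^ j * ((Module.finrank R M).choose (m - 1 - j) : R) := by
  rw [Finset.mul_sum]
  refine eq_sum_range_neg_one_pow_of_add_succ (by simp [wedgeContractPow_zero])
    (trace_wedgeContractPow_add_succ d v) m |>.trans ?_
  simp only [mul_left_comm]

end ExteriorAlgebra

/-- the trace of `σ(ξ) = |ξ|⁻²(ε(ξ)ι(ξ) − ι(ξ)ε(ξ))` on `Λᵐ` equals
`2 A_{n,m−1} − C(n,m)`, independently of the nonzero covector `ξ`. -/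
theorem statement7 {n : ℕ} (m : ℕ) (ξ : Vn n) (hξ : ξ ≠ 0) :
    LinearMap.trace ℝ (⋀[ℝ]^m (Vn n)) (sigmaR ξ m)
      = 2 * (∑ j ∈ Finset.range m, (-1 : ℝ) ^ j * (n.choose (m - 1 - j)))
        - (n.choose m : ℝ) := by
  set d := (innerSL ℝ ξ).toLinearMap
  have hd : d ξ = ‖ξ‖ ^ 2 := real_inner_self_eq_norm_sq ξ
  have hξ_norm : ‖ξ‖ ≠ 0 := norm_ne_zero_iff.mpr hξ
  have h_trace : LinearMap.trace ℝ _ (sigmaR ξ m) = (‖ξ‖ ^ 2)⁻¹ *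
      (LinearMap.trace ℝ _ (wedgeContractPow d ξ m)
        - LinearMap.trace ℝ _ (wedgeContractPow d ξ (m + 1))) := by
    rw [wedgeContractPow_succ, ← LinearMap.trace_comp_comm', ← map_sub, ← smul_eq_mul, ← map_smul]
    rfl
  have h_succ := trace_wedgeContractPow_add_succ d ξ m
  have h_formula := trace_wedgeContractPow d ξ m
  rw [finrank_euclideanSpace_fin, hd] at h_succ h_formula
  rw [h_trace]
  field_simp
  linear_combination 2 * h_formula - h_succ
end
end

section
/- Let A be a commutative subalgebra of an associative algebra B, S ∈ B with S²f = fS² for all f ∈ A, and τ: B → ℂ a trace. Then τ(f₀[S,f][S,h]) = τ(f₀[S,h][S,f]) for all f₀, f, h ∈ A. -/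
/-- if `A` is a commutative subalgebra of `B`, `S ∈ B` satisfies
`S²f = fS²` for all `f ∈ A`, and `τ` is a trace on `B`, then
`τ(f₀[S,f][S,h]) = τ(f₀[S,h][S,f])` for all `f₀, f, h ∈ A`. -/
theorem statement11 {B : Type*} [Ring B] [Algebra ℂ B] (A : Subalgebra ℂ B)
    (hA : ∀ x ∈ A, ∀ y ∈ A, x * y = y * x) (S : B)
    (hS : ∀ f ∈ A, S * S * f = f * (S * S))
    (τ : B →ₗ[ℂ] ℂ) (hτ : ∀ x y : B, τ (x * y) = τ (y * x))
    (f₀ f h : B) (hf₀ : f₀ ∈ A) (hf : f ∈ A) (hh : h ∈ A) :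
    τ (f₀ * ((S * f - f * S) * (S * h - h * S)))
      = τ (f₀ * ((S * h - h * S) * (S * f - f * S))) := by
  have hfh : f * h = h * f := hA f hf h hh
  have e1 : τ (f₀ * S * f * S * h) = τ (f₀ * h * S * f * S) := by
    rw [hτ (f₀ * S * f * S) h]
    simp only [← mul_assoc]
    rw [hA h hh f₀ hf₀]
  have e2 : τ (f₀ * S * f * h * S) = τ (f₀ * S * h * f * S) := by
    rw [mul_assoc (f₀ * S) f h, hfh, ← mul_assoc]
  have e3 : τ (f₀ * f * (S * S) * h) = τ (f₀ * h * (S * S) * f) := by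
    have l : f₀ * f * (S * S) * h = f₀ * (f * h) * (S * S) := by
      rw [mul_assoc (f₀ * f) (S * S) h, hS h hh, ← mul_assoc, mul_assoc f₀ f h]
    have r : f₀ * h * (S * S) * f = f₀ * (h * f) * (S * S) := by
      rw [mul_assoc (f₀ * h) (S * S) f, hS f hf, ← mul_assoc, mul_assoc f₀ h f]
    rw [l, r, hfh]
  have e4 : τ (f₀ * S * h * S * f) = τ (f₀ * f * S * h * S) := by
    rw [hτ (f₀ * S * h * S) f]
    simp only [← mul_assoc]
    rw [hA f hf f₀ hf₀]
  have expandL : f₀ * ((S * f - f * S) * (S * h - h * S))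
      = f₀ * S * f * S * h - f₀ * S * f * h * S
        - f₀ * f * (S * S) * h + f₀ * f * S * h * S := by
    noncomm_ring
  have expandR : f₀ * ((S * h - h * S) * (S * f - f * S))
      = f₀ * S * h * S * f - f₀ * S * h * f * S
        - f₀ * h * (S * S) * f + f₀ * h * S * f * S := by
    noncomm_ring
  rw [expandL, expandR]
  simp only [map_sub, map_add]
  rw [e1, e2, e3, e4]
  ring
end
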